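/- arXiv:1307.2319 — 6 statements merged into one kernel-verified Lean document; each statement's English description precedes it below -/
import Mathlib

section
/- For all real numbers x and y with 2 ≤ y ≤ x/2, one has x^x / (x-y)^(x-y) < e^(2y) · x^y. -/
/-! Splitting off `x ^ y` leaves `(x / (x - y)) ^ (x - y)`, and `(c / a) ^ a ≤ e ^ (c - a)` (from
`t ≤ e ^ (t - 1)`) bounds it by `e ^ y`, which is smaller than `e ^ (2 y)`. -/

open Real

theorem rpow_self_div_rpow_sub_eq {x y : ℝ} (hx : 0 < x) (hyx : y ≤ x) :
    x ^ x / (x - y) ^ (x - y) = (x / (x - y)) ^ (x - y) * x ^ y := by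
  rw [div_rpow hx.le (sub_nonneg.mpr hyx), div_mul_eq_mul_div, ← rpow_add hx, sub_add_cancel]

theorem div_rpow_self_le_exp_sub {a c : ℝ} (ha : 0 < a) (hc : 0 ≤ c) :
    (c / a) ^ a ≤ exp (c - a) :=
  calc (c / a) ^ a ≤ exp (c / a - 1) ^ a := by
        gcongr
        linarith [add_one_le_exp (c / a - 1)]
    _ = exp (c - a) := by
        rw [← exp_mul]
        field_simp

theorem stmt_0 (x y : ℝ) (h2 : 2 ≤ y) (hxy : y ≤ x / 2) :
    x ^ x / (x - y) ^ (x - y) < Real.exp (2 * y) * x ^ y := by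
  have hx : 0 < x := by linarith
  calc x ^ x / (x - y) ^ (x - y) = (x / (x - y)) ^ (x - y) * x ^ y :=
        rpow_self_div_rpow_sub_eq hx (by linarith)
    _ ≤ exp (x - (x - y)) * x ^ y := by
        gcongr
        exact div_rpow_self_le_exp_sub (by linarith) hx.le
    _ = exp y * x ^ y := by rw [sub_sub_cancel]
    _ < exp (2 * y) * x ^ y := by
        gcongr
        linarith
end

section
/- Fix an integer a ≥ 2. There exists a constant C > 0 such that for all real x ≥ 2, the sum of n / ord_n(a), taken over positive integers n ≤ x with gcd(n,a) = 1 and ord_n(a) ≤ 3 · (log x)/(log a), is at most C · x^(3/2) · log x. -/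
/-!
If `d = ord_n(a)` then `n ∣ a ^ d - 1`, so every `n` in the sum is a divisor of `a ^ d - 1` for
some `1 ≤ d ≤ 3 log x / log a`. For such `d` we have `a ^ d ≤ x ^ 3`, so the divisor bound
`τ(m) ≪ m ^ (1/6)` gives `a ^ d - 1` at most `O(√x)` divisors. Hence the sum has
`O(√x log x)` terms, each at most `n ≤ x`.
-/

open Finset

namespace Nat

theorem succ_pow_le_pow_mul_two_pow (k e : ℕ) : (e + 1) ^ k ≤ k ^ k * 2 ^ (e + 1) := by
  rcases k.eq_zero_or_pos with rfl | hk
  · simp [Nat.one_le_two_pow]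
  set q := (e + 1) / k
  have hsucc : e + 1 ≤ k * 2 ^ q :=
    (lt_mul_div_succ (e + 1) hk).le.trans (Nat.mul_le_mul_left k Nat.lt_two_pow_self)
  calc (e + 1) ^ k ≤ (k * 2 ^ q) ^ k := Nat.pow_le_pow_left hsucc k
    _ = k ^ k * 2 ^ (q * k) := by rw [mul_pow, ← pow_mul]
    _ ≤ k ^ k * 2 ^ (e + 1) :=
        Nat.mul_le_mul_left _ (Nat.pow_le_pow_right two_pos (div_mul_le_self _ _))

theorem succ_pow_le_pow_of_two_pow_le {k p : ℕ} (hp : 2 ^ k ≤ p) (e : ℕ) :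
    (e + 1) ^ k ≤ p ^ e :=
  calc (e + 1) ^ k ≤ (2 ^ e) ^ k := Nat.pow_le_pow_left Nat.lt_two_pow_self k
    _ = (2 ^ k) ^ e := by rw [← pow_mul, ← pow_mul, mul_comm]
    _ ≤ p ^ e := Nat.pow_le_pow_left hp e

/-- For primes `p ≥ 2 ^ k` the local factor `(e + 1) ^ k` is at most `p ^ e`; each of the fewer
than `2 ^ k` smaller primes costs at most a factor `2 * k ^ k`. -/
theorem card_divisors_pow_le (k : ℕ) {m : ℕ} (hm : m ≠ 0) :
    #m.divisors ^ k ≤ (2 * k ^ k) ^ 2 ^ k * m := by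
  set c := 2 * k ^ k
  have hc : 0 < c := Nat.mul_pos two_pos Nat.pow_self_pos
  have hprime : ∀ p ∈ m.primeFactors,
      (m.factorization p + 1) ^ k ≤ (if p < 2 ^ k then c else 1) * p ^ m.factorization p := by
    intro p hp
    have hp2 : 2 ≤ p := (prime_of_mem_primeFactors hp).two_le
    split_ifs with hp_small
    · calc (m.factorization p + 1) ^ k ≤ k ^ k * 2 ^ (m.factorization p + 1) :=
            succ_pow_le_pow_mul_two_pow k _
        _ = c * 2 ^ m.factorization p := by ring
        _ ≤ c * p ^ m.factorization p := Nat.mul_le_mul_left c (Nat.pow_le_pow_left hp2 _)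
    · rw [one_mul]
      exact succ_pow_le_pow_of_two_pow_le (not_lt.mp hp_small) _
  have hsmall : ∏ p ∈ m.primeFactors, (if p < 2 ^ k then c else 1) ≤ c ^ 2 ^ k := by
    rw [← prod_filter, prod_const]
    refine Nat.pow_le_pow_right hc ((card_le_card fun p hp ↦ ?_).trans (card_range _).le)
    exact mem_range.mpr (mem_filter.mp hp).2
  calc #m.divisors ^ k = ∏ p ∈ m.primeFactors, (m.factorization p + 1) ^ k := by
        rw [card_divisors hm, prod_pow]
    _ ≤ ∏ p ∈ m.primeFactors, (if p < 2 ^ k then c else 1) * p ^ m.factorization p :=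
        prod_le_prod' hprime
    _ = (∏ p ∈ m.primeFactors, (if p < 2 ^ k then c else 1)) * m := by
        rw [prod_mul_distrib, ← prod_primeFactors_pow_factorization hm]
    _ ≤ c ^ 2 ^ k * m := Nat.mul_le_mul_right m hsmall

theorem exists_card_divisors_le_rpow {k : ℕ} (hk : k ≠ 0) :
    ∃ C : ℝ, 0 < C ∧ ∀ m : ℕ, m ≠ 0 → (#m.divisors : ℝ) ≤ C * (m : ℝ) ^ (k⁻¹ : ℝ) := by
  obtain ⟨c, hc, hpow⟩ : ∃ c : ℝ, 0 < c ∧ ∀ m : ℕ, m ≠ 0 → (#m.divisors : ℝ) ^ k ≤ c * m :=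
    ⟨(2 * k ^ k) ^ 2 ^ k, by positivity, fun m hm ↦ mod_cast card_divisors_pow_le k hm⟩
  refine ⟨c ^ (k⁻¹ : ℝ), by positivity, fun m hm ↦ ?_⟩
  calc (#m.divisors : ℝ) = ((#m.divisors : ℝ) ^ k) ^ (k⁻¹ : ℝ) :=
        (Real.pow_rpow_inv_natCast (by positivity) hk).symm
    _ ≤ (c * m) ^ (k⁻¹ : ℝ) := by gcongr; exact hpow m hm
    _ = c ^ (k⁻¹ : ℝ) * (m : ℝ) ^ (k⁻¹ : ℝ) := Real.mul_rpow hc.le (by positivity)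

end Nat

theorem ZMod.orderOf_natCast_pos {a n : ℕ} [NeZero n] (h : n.Coprime a) :
    0 < orderOf (a : ZMod n) := by
  obtain ⟨u, hu⟩ := (ZMod.isUnit_iff_coprime a n).mpr h.symm
  rw [← hu, orderOf_units]
  exact orderOf_pos u

theorem ZMod.dvd_pow_orderOf_natCast_sub_one (a n : ℕ) :
    n ∣ a ^ orderOf (a : ZMod n) - 1 := by
  rcases Nat.eq_zero_or_pos (a ^ orderOf (a : ZMod n)) with h0 | hpos
  · simp [h0]
  rw [← Nat.modEq_iff_dvd' hpos, ← ZMod.natCast_eq_natCast_iff]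
  push_cast
  exact (pow_orderOf_eq_one _).symm

theorem card_le_sum_card_divisors_pow_sub_one {a N : ℕ} (ha : 1 < a) {S : Finset ℕ}
    (hS : ∀ n ∈ S, n ≠ 0 ∧ n.Coprime a ∧ orderOf (a : ZMod n) ≤ N) :
    #S ≤ ∑ d ∈ Icc 1 N, #(a ^ d - 1).divisors := by
  classical
  refine (card_le_card fun n hn ↦ ?_).trans card_biUnion_le
  obtain ⟨hn0, hcop, hN⟩ := hS n hn
  have : NeZero n := ⟨hn0⟩
  have hpos := ZMod.orderOf_natCast_pos hcop
  exact mem_biUnion.mpr ⟨_, mem_Icc.mpr ⟨hpos, hN⟩,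
    Nat.mem_divisors.mpr ⟨ZMod.dvd_pow_orderOf_natCast_sub_one a n,
      Nat.sub_ne_zero_of_lt (Nat.one_lt_pow hpos.ne' ha)⟩⟩

theorem card_le_mul_of_card_divisors_pow_sub_one_le {a N : ℕ} (ha : 1 < a) {S : Finset ℕ}
    (hS : ∀ n ∈ S, n ≠ 0 ∧ n.Coprime a ∧ orderOf (a : ZMod n) ≤ N) {B : ℝ}
    (hB : ∀ d ∈ Icc 1 N, (#(a ^ d - 1).divisors : ℝ) ≤ B) : (#S : ℝ) ≤ N * B :=
  calc (#S : ℝ) ≤ ∑ d ∈ Icc 1 N, (#(a ^ d - 1).divisors : ℝ) :=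
        mod_cast card_le_sum_card_divisors_pow_sub_one ha hS
    _ ≤ N * B := by simpa using sum_le_sum hB

theorem div_natCast_le_self {K : Type*} [Field K] [LinearOrder K] [IsStrictOrderedRing K]
    (m n : ℕ) : (m : K) / n ≤ m := by
  rcases n.eq_zero_or_pos with rfl | hn
  · simp
  · exact div_le_self m.cast_nonneg (Nat.one_le_cast.mpr hn)

theorem Real.pow_le_rpow_of_le_mul_log_div {b x c : ℝ} {d : ℕ} (hb : 1 < b) (hx : 0 < x)
    (hd : d ≤ c * Real.log x / Real.log b) : b ^ d ≤ x ^ c := by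
  rw [Real.pow_le_iff_le_log (by linarith) (by positivity), Real.log_rpow hx]
  exact (le_div_iff₀ (Real.log_pos hb)).mp hd

theorem card_divisors_pow_sub_one_le {a d k : ℕ} {C c x : ℝ} (ha : 1 < a) (hd : d ≠ 0)
    (hC : 0 ≤ C) (hx : 0 < x)
    (hτ : ∀ m : ℕ, m ≠ 0 → (#m.divisors : ℝ) ≤ C * (m : ℝ) ^ (k⁻¹ : ℝ))
    (hdx : (d : ℝ) ≤ c * Real.log x / Real.log a) :
    (#(a ^ d - 1).divisors : ℝ) ≤ C * x ^ (c / k) := by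
  have hpos : a ^ d - 1 ≠ 0 := Nat.sub_ne_zero_of_lt (Nat.one_lt_pow hd ha)
  have hpow : ((a ^ d - 1 : ℕ) : ℝ) ≤ x ^ c := by
    refine (Nat.cast_le.mpr (Nat.sub_le _ _)).trans ?_
    push_cast
    exact Real.pow_le_rpow_of_le_mul_log_div (mod_cast ha) hx hdx
  calc (#(a ^ d - 1).divisors : ℝ) ≤ C * ((a ^ d - 1 : ℕ) : ℝ) ^ (k⁻¹ : ℝ) := hτ _ hpos
    _ ≤ C * (x ^ c) ^ (k⁻¹ : ℝ) := by gcongr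
    _ = C * x ^ (c / k) := by rw [← Real.rpow_mul hx.le, div_eq_mul_inv]

open scoped Classical in
theorem stmt_5 (a : ℕ) (ha : 2 ≤ a) :
    ∃ C : ℝ, 0 < C ∧ ∀ x : ℝ, 2 ≤ x →
      ∑ n ∈ (Finset.Icc 1 ⌊x⌋₊).filter
          (fun n => Nat.Coprime n a ∧
            (orderOf (a : ZMod n) : ℝ) ≤ 3 * Real.log x / Real.log a),
          (n : ℝ) / (orderOf (a : ZMod n) : ℝ)
        ≤ C * x ^ ((3 : ℝ) / 2) * Real.log x := by
  obtain ⟨C, hC, hτ⟩ := Nat.exists_card_divisors_le_rpow (k := 6) (by norm_num)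
  have hlog2 : 0 < Real.log 2 := Real.log_pos one_lt_two
  refine ⟨3 * C / Real.log 2, by positivity, fun x hx ↦ ?_⟩
  have hx0 : 0 < x := by linarith
  have hlogx : 0 < Real.log x := Real.log_pos (by linarith)
  set N := ⌊3 * Real.log x / Real.log a⌋₊
  have hN : (N : ℝ) ≤ 3 * Real.log x / Real.log 2 :=
    (Nat.floor_le (by positivity)).trans
      (div_le_div_of_nonneg_left (by positivity) hlog2 (Real.log_le_log two_pos (mod_cast ha)))
  set S := (Finset.Icc 1 ⌊x⌋₊).filter (fun n => Nat.Coprime n a ∧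
    (orderOf (a : ZMod n) : ℝ) ≤ 3 * Real.log x / Real.log a)
  have hcard : (#S : ℝ) ≤ N * (C * x ^ (2⁻¹ : ℝ)) := by
    refine card_le_mul_of_card_divisors_pow_sub_one_le ha (fun n hn ↦ ?_) fun d hd ↦ ?_
    · obtain ⟨hn, hcop, hord⟩ := mem_filter.mp hn
      exact ⟨Nat.one_le_iff_ne_zero.mp (mem_Icc.mp hn).1, hcop, Nat.le_floor hord⟩
    · convert card_divisors_pow_sub_one_le ha (Nat.one_le_iff_ne_zero.mp (mem_Icc.mp hd).1)
        hC.le hx0 hτ ((Nat.cast_le.mpr (mem_Icc.mp hd).2).trans (Nat.floor_le (by positivity)))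
        using 3
      norm_num
  have hterm (n : ℕ) (hn : n ∈ S) : (n : ℝ) / (orderOf (a : ZMod n) : ℝ) ≤ x :=
    (div_natCast_le_self n _).trans
      ((Nat.cast_le.mpr (mem_Icc.mp (mem_filter.mp hn).1).2).trans (Nat.floor_le hx0.le))
  calc ∑ n ∈ S, (n : ℝ) / (orderOf (a : ZMod n) : ℝ) ≤ #S * x := by
        simpa using sum_le_card_nsmul S _ x hterm
    _ ≤ 3 * Real.log x / Real.log 2 * (C * x ^ (2⁻¹ : ℝ)) * x := by
        gcongr
        exact hcard.trans (by gcongr)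
    _ = 3 * C / Real.log 2 * x ^ ((3 : ℝ) / 2) * Real.log x := by
        rw [show (3 : ℝ) / 2 = 1 + 2⁻¹ by norm_num, Real.rpow_add hx0, Real.rpow_one]
        ring
end

section
/- Let K be a number field with ring of integers O_K and fix a real number β > 0. There exists a constant C > 0 such that for all real x ≥ 16, the number of nonzero ideals I of O_K with N(I) ≤ x and ω(I) ≥ (log x)^β is at most C · x · (log log x)² / (log x)^(2β). -/
open NumberField

/-- The number of distinct prime ideals dividing an ideal. -/
noncomputable def omegaIdeal {K : Type*} [Field K] [NumberField K]
    (I : Ideal (𝓞 K)) : ℕ :=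
  {P : Ideal (𝓞 K) | P.IsPrime ∧ P ∣ I}.ncard

/-
Rankin's trick. Every counted ideal contributes at least `2 ^ (log x) ^ β` to
`∑_{N(I) ≤ x} 2 ^ ω(I)`, and with `s = 1 + 1 / log x` this sum is at most
`x ^ s ∑ 2 ^ ω(I) N(I) ^ (-s) = e x ∑ 2 ^ ω(I) N(I) ^ (-s)`. Expanding over prime ideals, the local
factor at `P` is at most `(1 - N(P) ^ (-s)) ^ (-2)`; at most `[K : ℚ]` prime ideals lie above a rational
prime `p`, all of norm `≥ p`, so the Euler product is at most `ζ(s) ^ (2 [K : ℚ])`, and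
`ζ(s) ≤ 1 + 1 / (s - 1) = 1 + log x`. Finally `(log x) ^ (2 [K : ℚ] + 2 β) = O(2 ^ (log x) ^ β)`,
and `log log x ≥ 1` for `x ≥ 16`.
-/

open Finset UniqueFactorizationMonoid

theorem Finset.sum_prod_le_prod_sum_of_injOn {α ι β : Type*}
    (T : Finset α) (P : Finset ι) (E : Finset β) (c : α → ι → β) (g : ι → β → ℝ)
    (hg : ∀ i e, 0 ≤ g i e) (hc : ∀ a ∈ T, ∀ i ∈ P, c a i ∈ E)
    (hinj : ∀ a ∈ T, ∀ b ∈ T, (∀ i ∈ P, c a i = c b i) → a = b) :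
    ∑ a ∈ T, ∏ i ∈ P, g i (c a i) ≤ ∏ i ∈ P, ∑ e ∈ E, g i e := by
  classical
  let toPi : α → (∀ i ∈ P, β) := fun a i _ ↦ c a i
  have hinj' : Set.InjOn toPi T := fun a ha b hb h ↦
    hinj a ha b hb fun i hi ↦ congrFun (congrFun h i) hi
  rw [prod_sum]
  calc ∑ a ∈ T, ∏ i ∈ P, g i (c a i)
      = ∑ φ ∈ T.image toPi, ∏ i ∈ P.attach, g i (φ i i.2) := by
        rw [sum_image hinj']
        exact sum_congr rfl fun a _ ↦ (prod_attach P fun i ↦ g i (c a i)).symm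
    _ ≤ ∑ φ ∈ P.pi fun _ ↦ E, ∏ i ∈ P.attach, g i (φ i i.2) := by
        refine sum_le_sum_of_subset_of_nonneg ?_ fun _ _ _ ↦ prod_nonneg fun _ _ ↦ hg _ _
        rintro _ hφ
        obtain ⟨a, ha, rfl⟩ := mem_image.mp hφ
        exact mem_pi.mpr fun i hi ↦ hc a ha i hi

/-- The coefficient of `r ^ e` in `(1 + r) / (1 - r)`, the local Euler factor of the Dirichlet
series of `2 ^ ω`. -/
def twoPowOmegaCoeff (r : ℝ) (e : ℕ) : ℝ := if e = 0 then 1 else 2 * r ^ e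

theorem twoPowOmegaCoeff_nonneg {r : ℝ} (hr : 0 ≤ r) (e : ℕ) : 0 ≤ twoPowOmegaCoeff r e := by
  unfold twoPowOmegaCoeff
  split_ifs <;> positivity

theorem sum_range_twoPowOmegaCoeff_le {r : ℝ} (hr₀ : 0 ≤ r) (hr₁ : r < 1) (m : ℕ) :
    ∑ e ∈ range (m + 1), twoPowOmegaCoeff r e ≤ (1 - r)⁻¹ ^ 2 := by
  have hgeom : ∑ e ∈ range m, r ^ e ≤ (1 - r)⁻¹ :=
    (tsum_geometric_of_lt_one hr₀ hr₁) ▸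
      (summable_geometric_of_lt_one hr₀ hr₁).sum_le_tsum _ fun e _ ↦ by positivity
  have hinv : (1 - r)⁻¹ * (1 - r) = 1 := inv_mul_cancel₀ (by linarith)
  have hsum : ∑ e ∈ range (m + 1), twoPowOmegaCoeff r e = 2 * r * ∑ e ∈ range m, r ^ e + 1 := by
    simp only [sum_range_succ', twoPowOmegaCoeff, Nat.succ_ne_zero, if_false, if_true, mul_sum]
    exact congrArg (· + 1) (sum_congr rfl fun e _ ↦ by ring)
  rw [hsum]
  nlinarith [sq_nonneg ((1 - r)⁻¹ - 1), mul_le_mul_of_nonneg_left hgeom (by linarith : 0 ≤ 2 * r)]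

theorem one_le_one_sub_rpow_neg_inv {q s : ℝ} (hq : 1 < q) (hs : 0 < s) :
    1 ≤ (1 - q ^ (-s))⁻¹ :=
  (one_le_inv₀ (by linarith [Real.rpow_lt_one_of_one_lt_of_neg hq (neg_neg_of_pos hs)])).mpr
    (by linarith [Real.rpow_nonneg (zero_le_one.trans hq.le) (-s)])

theorem antitoneOn_one_sub_rpow_neg_inv {s : ℝ} (hs : 0 < s) :
    AntitoneOn (fun q : ℝ ↦ (1 - q ^ (-s))⁻¹) (Set.Ioi 1) := fun a ha b _ hab ↦
  inv_anti₀ (by linarith [Real.rpow_lt_one_of_one_lt_of_neg ha (neg_neg_of_pos hs)])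
    (by linarith [Real.rpow_le_rpow_of_nonpos (zero_lt_one.trans ha) hab (neg_nonpos.mpr hs.le)])

theorem tsum_one_div_nat_add_one_rpow_le {s : ℝ} (hs : 1 < s) :
    ∑' n : ℕ, 1 / ((n : ℝ) + 1) ^ s ≤ 1 + 1 / (s - 1) := by
  -- `∑' 1 / (n + 1) ^ s = 1 + 1 / (s - 1) - s * termTSum s`, a sum of nonnegative integrals
  have h := ZetaAsymptotics.zeta_limit_aux1 hs
  have : 0 ≤ ZetaAsymptotics.termTSum s := tsum_nonneg fun n ↦ ZetaAsymptotics.term_nonneg _ _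
  nlinarith

noncomputable def natCastRpowNeg (s : ℝ) : ℕ →* ℝ where
  toFun n := (n : ℝ) ^ (-s)
  map_one' := by simp
  map_mul' m n := by
    push_cast
    exact Real.mul_rpow m.cast_nonneg n.cast_nonneg

theorem prod_primesBelow_one_sub_rpow_neg_inv_le {s : ℝ} (hs : 1 < s) (N : ℕ) :
    ∏ p ∈ N.primesBelow, (1 - (p : ℝ) ^ (-s))⁻¹ ≤ 1 + 1 / (s - 1) := by
  have hsum : Summable (natCastRpowNeg s) := Real.summable_nat_rpow.mpr (by linarith)
  calc ∏ p ∈ N.primesBelow, (1 - (p : ℝ) ^ (-s))⁻¹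
      = ∑' m : N.smoothNumbers, natCastRpowNeg s m :=
        EulerProduct.prod_primesBelow_geometric_eq_tsum_smoothNumbers hsum N
    _ ≤ ∑' n, natCastRpowNeg s n :=
        hsum.tsum_subtype_le _ _ fun n ↦ Real.rpow_nonneg n.cast_nonneg _
    _ = ∑' n : ℕ, 1 / ((n : ℝ) + 1) ^ s := by
        rw [hsum.tsum_eq_zero_add]
        simp [natCastRpowNeg, Real.rpow_neg, Real.zero_rpow (by linarith : s ≠ 0)]
    _ ≤ 1 + 1 / (s - 1) := tsum_one_div_nat_add_one_rpow_le hs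

theorem rpow_le_mul_two_rpow_rpow {a β L : ℝ} (hβ : 0 < β) (hL : 1 ≤ L) :
    L ^ a ≤ (⌈a / β⌉₊).factorial / Real.log 2 ^ ⌈a / β⌉₊ * 2 ^ L ^ β := by
  set k := ⌈a / β⌉₊
  set u := L ^ β
  have hu : 1 ≤ u := Real.one_le_rpow hL hβ.le
  have hlog2 : 0 < Real.log 2 := Real.log_pos one_lt_two
  -- `(u log 2) ^ k / k!` is a Taylor term of `exp (u log 2) = 2 ^ u`
  calc L ^ a = u ^ (a / β) := by
        rw [← Real.rpow_mul (by linarith), mul_div_cancel₀ _ hβ.ne']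
    _ ≤ u ^ k := by
        rw [← Real.rpow_natCast]
        exact Real.rpow_le_rpow_of_exponent_le hu (Nat.le_ceil _)
    _ = k.factorial / Real.log 2 ^ k * ((u * Real.log 2) ^ k / k.factorial) := by
        field_simp
        ring
    _ ≤ k.factorial / Real.log 2 ^ k * 2 ^ u := by
        rw [Real.rpow_def_of_pos two_pos, mul_comm (Real.log 2)]
        gcongr
        exact Real.pow_div_factorial_le_exp _ (by positivity) k

namespace Ideal

variable {S : Type*} [CommRing S] [IsDedekindDomain S]

section DecidableEq

variable [DecidableEq (Ideal S)]

theorem pow_count_normalizedFactors_dvd {I : Ideal S} (hI : I ≠ ⊥) (Q : Ideal S) :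
    Q ^ (normalizedFactors I).count Q ∣ I := by
  conv_rhs => rw [← prod_normalizedFactors_eq_self hI]
  rw [← Multiset.prod_replicate]
  exact Multiset.prod_dvd_prod_of_le (Multiset.le_count_iff_replicate_le.mp le_rfl)

theorem eq_of_count_normalizedFactors_eq {I J : Ideal S} (hI : I ≠ ⊥) (hJ : J ≠ ⊥)
    (h : ∀ Q, (normalizedFactors I).count Q = (normalizedFactors J).count Q) : I = J :=
  associated_iff_eq.mp <|
    (associated_iff_normalizedFactors_eq_normalizedFactors hI hJ).mpr (Multiset.ext.mpr h)

theorem two_pow_card_primeFactors_mul_map_eq_prod (f : Ideal S →* ℝ) {I : Ideal S} (hI : I ≠ ⊥)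
    {P : Finset (Ideal S)} (hP : primeFactors I ⊆ P) :
    2 ^ #(primeFactors I) * f I =
      ∏ Q ∈ P, twoPowOmegaCoeff (f Q) ((normalizedFactors I).count Q) := by
  rw [← toFinset_normalizedFactors] at hP ⊢
  have hfI : f I = ∏ Q ∈ (normalizedFactors I).toFinset, f Q ^ (normalizedFactors I).count Q := by
    rw [← prod_multiset_map_count, ← map_multiset_prod, prod_normalizedFactors_eq_self hI]
  rw [hfI, ← prod_const, ← prod_mul_distrib]
  refine prod_subset_one_on_sdiff hP (fun Q hQ ↦ ?_) (fun Q hQ ↦ ?_)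
  · rw [Multiset.count_eq_zero.mpr (Multiset.mem_toFinset.not.mp (mem_sdiff.mp hQ).2)]
    rfl
  · rw [twoPowOmegaCoeff, if_neg (Multiset.count_ne_zero.mpr (Multiset.mem_toFinset.mp hQ))]

end DecidableEq

variable [Module.Free ℤ S] [Module.Finite ℤ S]

theorem absNorm_pos_of_ne_bot {I : Ideal S} (hI : I ≠ ⊥) : 0 < absNorm I :=
  Nat.pos_of_ne_zero (absNorm_ne_zero_of_nonZeroDivisors ⟨I, mem_nonZeroDivisors_of_ne_zero hI⟩)

theorem absNorm_le_of_dvd {I J : Ideal S} (hJ : J ≠ ⊥) (h : I ∣ J) : absNorm I ≤ absNorm J :=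
  Nat.le_of_dvd (absNorm_pos_of_ne_bot hJ) (map_dvd absNorm h)

theorem exists_prime_absNorm_eq_pow_of_prime {P : Ideal S} (hP : Prime P) :
    ∃ p n : ℕ, 0 < n ∧ (p : S) ∈ P ∧ p.Prime ∧ absNorm P = p ^ n :=
  have := (isPrime_of_prime hP).isMaximal hP.ne_zero
  exists_prime_and_absNorm_eq_pow P

theorem one_lt_absNorm_of_prime {P : Ideal S} (hP : Prime P) : 1 < absNorm P := by
  obtain ⟨p, n, hn, -, hp, hPn⟩ := exists_prime_absNorm_eq_pow_of_prime hP
  exact hPn ▸ Nat.one_lt_pow hn.ne' hp.one_lt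

theorem natCast_minFac_absNorm_mem {P : Ideal S} (hP : Prime P) :
    ((absNorm P).minFac : S) ∈ P := by
  obtain ⟨p, n, hn, hpP, hp, hPn⟩ := exists_prime_absNorm_eq_pow_of_prime hP
  rwa [hPn, hp.pow_minFac hn.ne']

theorem count_normalizedFactors_lt_absNorm [DecidableEq (Ideal S)] {I : Ideal S} (hI : I ≠ ⊥)
    (Q : Ideal S) : (normalizedFactors I).count Q < absNorm I := by
  by_cases hQ : Q ∈ normalizedFactors I
  · calc (normalizedFactors I).count Q < 2 ^ (normalizedFactors I).count Q := Nat.lt_two_pow_self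
      _ ≤ absNorm Q ^ (normalizedFactors I).count Q :=
        Nat.pow_le_pow_left (one_lt_absNorm_of_prime (prime_of_normalized_factor Q hQ)) _
      _ ≤ absNorm I := by
        rw [← map_pow]
        exact absNorm_le_of_dvd hI (pow_count_normalizedFactors_dvd hI Q)
  · rw [Multiset.count_eq_zero.mpr hQ]
    exact absNorm_pos_of_ne_bot hI

theorem card_filter_minFac_absNorm_eq_le {P : Finset (Ideal S)} (hP : ∀ Q ∈ P, Prime Q)
    {p : ℕ} (hp : p.Prime) :
    #{Q ∈ P | (absNorm Q).minFac = p} ≤ Module.finrank ℤ S := by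
  -- these ideals all divide `(p)`, of norm `p ^ d`, and each has norm divisible by `p`
  set F := {Q ∈ P | (absNorm Q).minFac = p}
  have hF : ∀ Q ∈ F, Prime Q ∧ (absNorm Q).minFac = p := fun Q hQ ↦
    ⟨hP Q (mem_filter.mp hQ).1, (mem_filter.mp hQ).2⟩
  have hprod : ∏ Q ∈ F, Q ∣ span {(p : S)} := by
    refine prod_primes_dvd _ (fun Q hQ ↦ (hF Q hQ).1) fun Q hQ ↦ ?_
    rw [dvd_span_singleton, ← (hF Q hQ).2]
    exact natCast_minFac_absNorm_mem (hF Q hQ).1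
  have hpow : p ^ #F ∣ ∏ Q ∈ F, absNorm Q := by
    rw [← prod_const]
    exact prod_dvd_prod_of_dvd _ _ fun Q hQ ↦ (hF Q hQ).2 ▸ Nat.minFac_dvd _
  have hdvd : p ^ #F ∣ p ^ Module.finrank ℤ S := by
    rw [← absNorm_span_natCast]
    exact hpow.trans (map_prod absNorm (fun Q ↦ Q) F ▸ map_dvd absNorm hprod)
  exact (Nat.pow_dvd_pow_iff_le_right hp.one_lt).mp hdvd

theorem prod_le_prod_primesBelow_pow {P : Finset (Ideal S)} {n : ℕ}
    (hP : ∀ Q ∈ P, Prime Q ∧ absNorm Q ≤ n) {h : ℕ → ℝ} (h_one_le : ∀ q, 2 ≤ q → 1 ≤ h q)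
    (h_anti : AntitoneOn h (Set.Ici 2)) :
    ∏ Q ∈ P, h (absNorm Q) ≤ ∏ p ∈ (n + 1).primesBelow, h p ^ Module.finrank ℤ S := by
  have two_le : ∀ Q ∈ P, 2 ≤ absNorm Q := fun Q hQ ↦ one_lt_absNorm_of_prime (hP Q hQ).1
  have hmaps : ∀ Q ∈ P, (absNorm Q).minFac ∈ (n + 1).primesBelow := fun Q hQ ↦
    Nat.mem_primesBelow.mpr ⟨Nat.lt_succ_of_le ((Nat.minFac_le (by grind)).trans (hP Q hQ).2),
      Nat.minFac_prime (by grind)⟩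
  rw [← prod_fiberwise_of_maps_to hmaps]
  refine prod_le_prod (fun p _ ↦ prod_nonneg fun Q hQ ↦ ?_) fun p hp ↦ ?_
  · exact zero_le_one.trans (h_one_le _ (two_le Q (mem_filter.mp hQ).1))
  have hp2 : 2 ≤ p := (Nat.mem_primesBelow.mp hp).2.two_le
  calc ∏ Q ∈ P with (absNorm Q).minFac = p, h (absNorm Q)
      ≤ ∏ Q ∈ P with (absNorm Q).minFac = p, h p := by
        refine prod_le_prod (fun Q hQ ↦ zero_le_one.trans (h_one_le _ ?_)) fun Q hQ ↦ ?_
        · exact two_le Q (mem_filter.mp hQ).1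
        obtain ⟨hQP, rfl⟩ := mem_filter.mp hQ
        exact h_anti (Set.mem_Ici.mpr hp2) (Set.mem_Ici.mpr (two_le Q hQP))
          (Nat.minFac_le (by grind [two_le Q hQP]))
    _ = h p ^ #{Q ∈ P | (absNorm Q).minFac = p} := prod_const _
    _ ≤ h p ^ Module.finrank ℤ S :=
        pow_le_pow_right₀ (h_one_le p hp2)
          (card_filter_minFac_absNorm_eq_le (fun Q hQ ↦ (hP Q hQ).1) (Nat.mem_primesBelow.mp hp).2)

theorem sum_prod_count_normalizedFactors_le [DecidableEq (Ideal S)] {T P : Finset (Ideal S)}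
    {n : ℕ} (hT : ∀ I ∈ T, I ≠ ⊥ ∧ absNorm I ≤ n) (hP : ∀ I ∈ T, primeFactors I ⊆ P)
    (g : Ideal S → ℕ → ℝ) (hg : ∀ Q e, 0 ≤ g Q e) :
    ∑ I ∈ T, ∏ Q ∈ P, g Q ((normalizedFactors I).count Q) ≤
      ∏ Q ∈ P, ∑ e ∈ range (n + 1), g Q e := by
  refine sum_prod_le_prod_sum_of_injOn T P _ _ g hg (fun I hI Q _ ↦ ?_) fun I hI J hJ hIJ ↦ ?_
  · exact mem_range.mpr (Nat.lt_succ_of_le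
      ((count_normalizedFactors_lt_absNorm (hT I hI).1 Q).le.trans (hT I hI).2))
  refine eq_of_count_normalizedFactors_eq (hT I hI).1 (hT J hJ).1 fun Q ↦ ?_
  by_cases hQ : Q ∈ P
  · exact hIJ Q hQ
  · rw [Multiset.count_eq_zero.mpr fun h ↦ hQ (hP I hI (mem_primeFactors.mpr h)),
      Multiset.count_eq_zero.mpr fun h ↦ hQ (hP J hJ (mem_primeFactors.mpr h))]

theorem prod_one_sub_absNorm_rpow_neg_inv_le {P : Finset (Ideal S)} {n : ℕ}
    (hP : ∀ Q ∈ P, Prime Q ∧ absNorm Q ≤ n) {s : ℝ} (hs : 1 < s) :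
    ∏ Q ∈ P, (1 - (absNorm Q : ℝ) ^ (-s))⁻¹ ≤ (1 + 1 / (s - 1)) ^ Module.finrank ℤ S := by
  refine (prod_le_prod_primesBelow_pow hP (h := fun q ↦ (1 - (q : ℝ) ^ (-s))⁻¹)
    (fun q hq ↦ ?_) fun a ha b hb hab ↦ ?_).trans ?_
  · exact one_le_one_sub_rpow_neg_inv (by exact_mod_cast hq) (by linarith)
  · exact antitoneOn_one_sub_rpow_neg_inv (by linarith) (show (1 : ℝ) < a by exact_mod_cast ha)
      (show (1 : ℝ) < b by exact_mod_cast hb) (by exact_mod_cast hab)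
  rw [prod_pow]
  refine pow_le_pow_left₀ (prod_nonneg fun p hp ↦ zero_le_one.trans ?_)
    (prod_primesBelow_one_sub_rpow_neg_inv_le hs _) _
  exact one_le_one_sub_rpow_neg_inv (mod_cast (Nat.mem_primesBelow.mp hp).2.one_lt) (by linarith)

theorem sum_two_pow_card_primeFactors_mul_rpow_neg_le {T : Finset (Ideal S)} {n : ℕ}
    (hT : ∀ I ∈ T, I ≠ ⊥ ∧ absNorm I ≤ n) {s : ℝ} (hs : 1 < s) :
    ∑ I ∈ T, 2 ^ #(primeFactors I) * (absNorm I : ℝ) ^ (-s) ≤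
      (1 + 1 / (s - 1)) ^ (2 * Module.finrank ℤ S) := by
  classical
  let f : Ideal S →* ℝ := (natCastRpowNeg s).comp absNorm.toMonoidHom
  let P := T.biUnion primeFactors
  have hPT : ∀ I ∈ T, primeFactors I ⊆ P := fun _ hI ↦ subset_biUnion_of_mem primeFactors hI
  have hP : ∀ Q ∈ P, Prime Q ∧ absNorm Q ≤ n := by
    intro Q hQ
    obtain ⟨I, hI, hQI⟩ := mem_biUnion.mp hQ
    have hQI := mem_primeFactors.mp hQI
    exact ⟨prime_of_normalized_factor Q hQI, (absNorm_le_of_dvd (hT I hI).1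
      (dvd_of_mem_normalizedFactors hQI)).trans (hT I hI).2⟩
  have hf_nonneg (Q) : 0 ≤ f Q := Real.rpow_nonneg (Nat.cast_nonneg _) _
  have hf_lt_one {Q} (hQ : Q ∈ P) : f Q < 1 :=
    Real.rpow_lt_one_of_one_lt_of_neg (mod_cast one_lt_absNorm_of_prime (hP Q hQ).1) (by linarith)
  calc ∑ I ∈ T, 2 ^ #(primeFactors I) * (absNorm I : ℝ) ^ (-s)
      = ∑ I ∈ T, ∏ Q ∈ P, twoPowOmegaCoeff (f Q) ((normalizedFactors I).count Q) :=
        sum_congr rfl fun I hI ↦ two_pow_card_primeFactors_mul_map_eq_prod f (hT I hI).1 (hPT I hI)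
    _ ≤ ∏ Q ∈ P, ∑ e ∈ range (n + 1), twoPowOmegaCoeff (f Q) e :=
        sum_prod_count_normalizedFactors_le hT hPT _ fun Q ↦ twoPowOmegaCoeff_nonneg (hf_nonneg Q)
    _ ≤ ∏ Q ∈ P, (1 - f Q)⁻¹ ^ 2 :=
        prod_le_prod (fun Q _ ↦ sum_nonneg fun e _ ↦ twoPowOmegaCoeff_nonneg (hf_nonneg Q) e)
          fun Q hQ ↦ sum_range_twoPowOmegaCoeff_le (hf_nonneg Q) (hf_lt_one hQ) n
    _ ≤ ((1 + 1 / (s - 1)) ^ Module.finrank ℤ S) ^ 2 := by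
        rw [prod_pow]
        exact pow_le_pow_left₀
          (prod_nonneg fun Q hQ ↦ inv_nonneg.mpr (sub_nonneg.mpr (hf_lt_one hQ).le))
          (prod_one_sub_absNorm_rpow_neg_inv_le hP hs) 2
    _ = (1 + 1 / (s - 1)) ^ (2 * Module.finrank ℤ S) := by rw [← pow_mul, mul_comm]

theorem card_mul_two_rpow_le {T : Finset (Ideal S)} {x y : ℝ} (hx : 1 < x)
    (hT : ∀ I ∈ T, I ≠ ⊥ ∧ (absNorm I : ℝ) ≤ x ∧ y ≤ #(primeFactors I)) :
    #T * 2 ^ y ≤ Real.exp 1 * x * (1 + Real.log x) ^ (2 * Module.finrank ℤ S) := by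
  have hx₀ : 0 < x := by linarith
  have hL : 0 < Real.log x := Real.log_pos hx
  set s := 1 + (Real.log x)⁻¹
  have hs : 1 < s := lt_add_of_pos_right 1 (inv_pos.mpr hL)
  have hxs : x ^ s = Real.exp 1 * x := by
    rw [Real.rpow_add hx₀, Real.rpow_one, Real.rpow_inv_log hx₀ hx.ne', mul_comm]
  have hterm : ∀ I ∈ T, 2 ^ y * x ^ (-s) ≤ 2 ^ #(primeFactors I) * (absNorm I : ℝ) ^ (-s) := by
    intro I hI
    obtain ⟨hI₀, hIx, hyI⟩ := hT I hI
    have hN : (0 : ℝ) < absNorm I := mod_cast absNorm_pos_of_ne_bot hI₀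
    refine mul_le_mul ?_ (Real.rpow_le_rpow_of_nonpos hN hIx (by linarith)) (by positivity)
      (by positivity)
    rw [← Real.rpow_natCast]
    exact Real.rpow_le_rpow_of_exponent_le one_le_two hyI
  have hsum := sum_two_pow_card_primeFactors_mul_rpow_neg_le (n := ⌊x⌋₊)
    (fun I hI ↦ ⟨(hT I hI).1, Nat.le_floor (hT I hI).2.1⟩) hs
  calc (#T : ℝ) * 2 ^ y = x ^ s * ∑ _I ∈ T, 2 ^ y * x ^ (-s) := by
        rw [sum_const, nsmul_eq_mul, Real.rpow_neg hx₀.le]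
        field_simp
    _ ≤ x ^ s * (1 + 1 / (s - 1)) ^ (2 * Module.finrank ℤ S) := by
        gcongr
        exact (sum_le_sum hterm).trans hsum
    _ = Real.exp 1 * x * (1 + Real.log x) ^ (2 * Module.finrank ℤ S) := by
        rw [hxs, add_sub_cancel_left, one_div, inv_inv]

theorem exists_card_mul_rpow_le {β : ℝ} (hβ : 0 < β) :
    ∃ C > 0, ∀ x, Real.exp 1 ≤ x → ∀ T : Finset (Ideal S),
      (∀ I ∈ T, I ≠ ⊥ ∧ (absNorm I : ℝ) ≤ x ∧ Real.log x ^ β ≤ #(primeFactors I)) →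
      #T * Real.log x ^ (2 * β) ≤ C * x := by
  set d := Module.finrank ℤ S
  set k := ⌈(2 * d + 2 * β) / β⌉₊
  refine ⟨Real.exp 1 * 2 ^ (2 * d) * (k.factorial / Real.log 2 ^ k), by positivity,
    fun x hx T hT ↦ ?_⟩
  have hx₁ : 1 < x := by linarith [Real.add_one_le_exp (1 : ℝ)]
  set L := Real.log x
  have hL : 1 ≤ L := by rwa [Real.le_log_iff_exp_le (by linarith)]
  refine le_of_mul_le_mul_right ?_ (Real.rpow_pos_of_pos two_pos (L ^ β))
  calc #T * L ^ (2 * β) * 2 ^ L ^ β = #T * 2 ^ L ^ β * L ^ (2 * β) := by ring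
    _ ≤ Real.exp 1 * x * (2 * L) ^ (2 * d) * L ^ (2 * β) := by
        refine mul_le_mul_of_nonneg_right ((card_mul_two_rpow_le hx₁ hT).trans ?_) (by positivity)
        gcongr
        linarith
    _ = Real.exp 1 * 2 ^ (2 * d) * x * L ^ (2 * d + 2 * β) := by
        rw [Real.rpow_add (by linarith), mul_pow, ← Real.rpow_natCast L]
        push_cast
        ring
    _ ≤ Real.exp 1 * 2 ^ (2 * d) * x * (k.factorial / Real.log 2 ^ k * 2 ^ L ^ β) := by
        gcongr
        exact rpow_le_mul_two_rpow_rpow hβ hL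
    _ = Real.exp 1 * 2 ^ (2 * d) * (k.factorial / Real.log 2 ^ k) * x * 2 ^ L ^ β := by ring

end Ideal

theorem omegaIdeal_eq_card_primeFactors {K : Type*} [Field K] [NumberField K] {I : Ideal (𝓞 K)}
    (hI : I ≠ ⊥) : omegaIdeal I = #(primeFactors I) := by
  rw [omegaIdeal, ← Set.ncard_coe_finset]
  congr
  ext P
  simp [mem_primeFactors, Ideal.mem_normalizedFactors_iff hI, Ideal.dvd_iff_le]

theorem stmt_7 (K : Type*) [Field K] [NumberField K] (β : ℝ) (hβ : 0 < β) :
    ∃ C : ℝ, 0 < C ∧ ∀ x : ℝ, 16 ≤ x →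
      ({I : Ideal (𝓞 K) | I ≠ ⊥ ∧ (Ideal.absNorm I : ℝ) ≤ x ∧
          (Real.log x) ^ β ≤ (omegaIdeal I : ℝ)}.ncard : ℝ)
        ≤ C * x * (Real.log (Real.log x)) ^ 2 / (Real.log x) ^ (2 * β) := by
  obtain ⟨C, hC, hbound⟩ := Ideal.exists_card_mul_rpow_le (S := 𝓞 K) hβ
  refine ⟨C, hC, fun x hx ↦ ?_⟩
  have hlog16 : Real.exp 1 ≤ Real.log 16 := by
    rw [show (16 : ℝ) = 2 ^ 4 by norm_num, Real.log_pow]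
    push_cast
    linarith [Real.exp_one_lt_d9, Real.log_two_gt_d9]
  have hL : Real.exp 1 ≤ Real.log x := hlog16.trans (Real.log_le_log (by norm_num) hx)
  have hloglog : 1 ≤ Real.log (Real.log x) := by
    rwa [Real.le_log_iff_exp_le (by linarith [Real.exp_pos 1])]
  set A := {I : Ideal (𝓞 K) | I ≠ ⊥ ∧ (Ideal.absNorm I : ℝ) ≤ x ∧
    (Real.log x) ^ β ≤ (omegaIdeal I : ℝ)}
  have hA : A.Finite :=
    (Ideal.finite_setOfPred_absNorm_le ⌊x⌋₊).subset fun I hI ↦ Nat.le_floor hI.2.1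
  have hcard := hbound x (by linarith [Real.exp_one_lt_d9]) hA.toFinset fun I hI ↦ by
    obtain ⟨hI₀, hIx, hω⟩ := hA.mem_toFinset.mp hI
    exact ⟨hI₀, hIx, omegaIdeal_eq_card_primeFactors hI₀ ▸ hω⟩
  rw [← Set.ncard_coe_finset, hA.coe_toFinset] at hcard
  rw [le_div_iff₀ (Real.rpow_pos_of_pos (by linarith [Real.exp_pos 1]) _)]
  nlinarith [mul_le_mul_of_nonneg_left (one_le_pow₀ (n := 2) hloglog) (by positivity : 0 ≤ C * x)]
end

section
/- Let K be a number field with ring of integers O_K, and let a be a unit of O_K of infinite order (i.e. a^k ≠ 1 for all positive integers k). Then there exists a real constant C > 1 such that for every nonzero ideal I of O_K, N(I) ≤ C^(o_a(I)), where o_a(I) denotes the multiplicative order of the image of a in the unit group (O_K/I)ˣ. Equivalently, o_a(I) ≥ log N(I) / log C. -/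
open NumberField

/-! If `n` is the order of `a` modulo `I`, then `x = a ^ n - 1` is a nonzero element of `I`
(nonzero because `a` has infinite order), so `N(I)` divides `N(x)`. Every complex embedding of
`x` has absolute value at most `(h + 1) ^ n`, where `h` is the house of `a`, hence
`N(I) ≤ |N(x)| ≤ ((h + 1) ^ n) ^ d` with `d = [K : ℚ]`, and `C = (h + 1) ^ d` works. -/

theorem Ideal.val_pow_orderOf_map_sub_one_mem {R : Type*} [CommRing R] (I : Ideal R) (u : Rˣ) :
    (u : R) ^ orderOf (Units.map (Ideal.Quotient.mk I).toMonoidHom u) - 1 ∈ I := by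
  rw [← Ideal.Quotient.eq_zero_iff_mem, map_sub, map_pow, map_one, sub_eq_zero]
  exact congrArg Units.val (pow_orderOf_eq_one _)

theorem Ideal.absNorm_le_natAbs_norm_of_mem {S : Type*} [CommRing S] [IsDedekindDomain S]
    [Module.Free ℤ S] [Module.Finite ℤ S] {I : Ideal S} {x : S} (hx : x ∈ I) (hx0 : x ≠ 0) :
    Ideal.absNorm I ≤ (Algebra.norm ℤ x).natAbs := by
  rw [← Ideal.absNorm_span_singleton]
  refine Nat.le_of_dvd (Nat.pos_of_ne_zero ?_) <|
    Ideal.absNorm_dvd_absNorm_of_le ((Ideal.span_singleton_le_iff_mem _).mpr hx)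
  simpa [Ideal.absNorm_eq_zero_iff] using hx0

namespace NumberField

variable {K : Type*} [Field K] [NumberField K]

theorem norm_algebraNorm_le_house_pow (α : K) :
    ‖Algebra.norm ℚ α‖ ≤ house α ^ Module.finrank ℚ K := by
  obtain ⟨σ⟩ := (inferInstance : Nonempty (K →+* ℂ))
  calc ‖Algebra.norm ℚ α‖ ≤ ‖σ α‖ * house α ^ (Module.finrank ℚ K - 1) :=
        norm_norm_le_norm_mul_house_pow α σ
    _ ≤ house α * house α ^ (Module.finrank ℚ K - 1) :=
        mul_le_mul_of_nonneg_right (norm_embedding_le_house α σ) (pow_nonneg (house_nonneg α) _)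
    _ = house α ^ Module.finrank ℚ K := by
        rw [← pow_succ', Nat.sub_add_cancel Module.finrank_pos]

theorem house_pow_sub_one_le (α : K) {n : ℕ} (hn : n ≠ 0) :
    house (α ^ n - 1) ≤ (house α + 1) ^ n := by
  calc house (α ^ n - 1) ≤ house (α ^ n) + house (-1 : K) := by
        rw [sub_eq_add_neg]; exact house_add_le _ _
    _ ≤ house α ^ n + 1 := by
        gcongr
        · exact house_pow_le α n
        · simpa using (house_intCast (K := K) (-1)).le
    _ ≤ (house α + 1) ^ n := by
        simpa only [one_pow] using pow_add_pow_le (house_nonneg α) zero_le_one hn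

theorem RingOfIntegers.absNorm_le_house_pow_of_mem {I : Ideal (𝓞 K)} {x : 𝓞 K} (hx : x ∈ I)
    (hx0 : x ≠ 0) : (Ideal.absNorm I : ℝ) ≤ house (x : K) ^ Module.finrank ℚ K := by
  calc (Ideal.absNorm I : ℝ) ≤ (Algebra.norm ℤ x).natAbs := by
        exact_mod_cast Ideal.absNorm_le_natAbs_norm_of_mem hx hx0
    _ = ‖Algebra.norm ℚ (x : K)‖ := by
        rw [← Algebra.coe_norm_int]; simp [Int.norm_eq_abs]
    _ ≤ house (x : K) ^ Module.finrank ℚ K := norm_algebraNorm_le_house_pow _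

end NumberField

theorem stmt_13 (K : Type*) [Field K] [NumberField K] (a : (𝓞 K)ˣ)
    (ha : ∀ k : ℕ, 0 < k → a ^ k ≠ 1) :
    ∃ C : ℝ, 1 < C ∧ ∀ I : Ideal (𝓞 K), I ≠ ⊥ →
      (Ideal.absNorm I : ℝ) ≤
        C ^ (orderOf (Units.map (Ideal.Quotient.mk I).toMonoidHom a)) := by
  set d := Module.finrank ℚ K
  have hC : 1 < house ((a : 𝓞 K) : K) + 1 := by
    have := one_le_house_of_isIntegral (a : 𝓞 K).isIntegral_coe (by simp)
    linarith
  refine ⟨(house ((a : 𝓞 K) : K) + 1) ^ d, one_lt_pow₀ hC Module.finrank_pos.ne', fun I hI => ?_⟩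
  have : Finite (𝓞 K ⧸ I) := Ideal.finiteQuotientOfFreeOfNeBot I hI
  set n := orderOf (Units.map (Ideal.Quotient.mk I).toMonoidHom a)
  have hn : 0 < n := orderOf_pos _
  have hmem : (a : 𝓞 K) ^ n - 1 ∈ I := I.val_pow_orderOf_map_sub_one_mem a
  have hne : (a : 𝓞 K) ^ n - 1 ≠ 0 := fun h =>
    ha n hn (Units.ext (by simpa [sub_eq_zero] using h))
  calc (Ideal.absNorm I : ℝ) ≤ house (((a : 𝓞 K) ^ n - 1 : 𝓞 K) : K) ^ d :=
        RingOfIntegers.absNorm_le_house_pow_of_mem hmem hne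
    _ ≤ ((house ((a : 𝓞 K) : K) + 1) ^ n) ^ d := by
        gcongr
        · exact house_nonneg _
        · push_cast; exact house_pow_sub_one_le _ hn.ne'
    _ = ((house ((a : 𝓞 K) : K) + 1) ^ d) ^ n := by rw [← pow_mul, ← pow_mul, mul_comm]
end

section
/- Let K be a number field with ring of integers O_K whose unit group U_K = (O_K)ˣ has positive rank, i.e. U_K contains an element of infinite order. Then there exists a real constant c > 1 such that for every nonzero ideal I of O_K, N(I) ≤ c^([U_K : U_K(I)]), where U_K(I) is the subgroup of U_K consisting of units congruent to 1 modulo I. Equivalently, [U_K : U_K(I)] ≥ log N(I) / log c. -/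
/-!
If `n` is the index of `U_K(I)` and `u` a unit of infinite order, then `u ^ n ≡ 1 (mod I)` and
`u ^ n - 1 ≠ 0`, so `N(I) ≤ |N(u ^ n - 1)| = ∏_w w(u ^ n - 1) ^ mult w`. Each factor is at most
`(w u + 1) ^ (n * mult w)`, which gives the bound with `c = ∏_w (w u + 1) ^ mult w`.
-/

open NumberField

namespace Ideal

variable {R : Type*} [CommRing R] (I : Ideal R)

theorem val_pow_index_ker_unitsMap_sub_one_mem (u : Rˣ) :
    (u : R) ^ (Units.map (Quotient.mk I).toMonoidHom).ker.index - 1 ∈ I := by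
  have h := congrArg Units.val
    ((Units.map (Quotient.mk I).toMonoidHom).mem_ker.mp (Subgroup.pow_index_mem _ u))
  simp only [Units.coe_map, Units.val_pow_eq_pow_val, Units.val_one,
    RingHom.toMonoidHom_eq_coe, MonoidHom.coe_coe] at h
  rwa [← Quotient.eq_zero_iff_mem, map_sub, map_pow, map_one, sub_eq_zero]

theorem index_ker_unitsMap_ne_zero [Finite (R ⧸ I)] :
    (Units.map (Quotient.mk I).toMonoidHom).ker.index ≠ 0 := by
  rw [Subgroup.index_ker]
  exact Nat.card_pos.ne'

end Ideal

namespace NumberField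

variable {K : Type*} [Field K]

theorem InfinitePlace.apply_pow_sub_one_le (w : InfinitePlace K) (x : K) {n : ℕ} (hn : n ≠ 0) :
    w (x ^ n - 1) ≤ (w x + 1) ^ n :=
  calc w (x ^ n - 1) ≤ w (x ^ n) + w 1 := w.1.sub_le_add _ _
    _ = w x ^ n + 1 ^ n := by rw [map_pow, map_one, one_pow]
    _ ≤ (w x + 1) ^ n := pow_add_pow_le (apply_nonneg w x) zero_le_one hn

variable [NumberField K]

theorem one_lt_prod_infinitePlace_add_one_pow_mult {x : K} (hx : x ≠ 0) :
    1 < ∏ w : InfinitePlace K, (w x + 1) ^ w.mult := by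
  simpa using Finset.prod_lt_prod_of_nonempty (f := fun _ ↦ (1 : ℝ)) (fun _ _ ↦ one_pos)
    (fun w _ ↦ one_lt_pow₀ (lt_add_of_pos_left 1 (w.pos_iff.mpr hx)) w.mult_ne_zero)
    Finset.univ_nonempty

theorem prod_infinitePlace_pow_sub_one_le (x : K) {n : ℕ} (hn : n ≠ 0) :
    ∏ w : InfinitePlace K, w (x ^ n - 1) ^ w.mult ≤
      (∏ w : InfinitePlace K, (w x + 1) ^ w.mult) ^ n := by
  rw [← Finset.prod_pow]
  refine Finset.prod_le_prod (fun w _ ↦ by positivity) fun w _ ↦ ?_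
  rw [← pow_mul, mul_comm, pow_mul]
  exact pow_le_pow_left₀ (apply_nonneg w _) (w.apply_pow_sub_one_le x hn) _

theorem absNorm_le_prod_infinitePlace_of_mem {I : Ideal (𝓞 K)} {y : 𝓞 K} (hy : y ∈ I)
    (hy0 : y ≠ 0) : (Ideal.absNorm I : ℝ) ≤ ∏ w : InfinitePlace K, w (y : K) ^ w.mult := by
  have hle : Ideal.absNorm I ≤ Ideal.absNorm (Ideal.span {y}) :=
    Nat.le_of_dvd (Nat.pos_of_ne_zero (by simpa using hy0))
      (Ideal.absNorm_dvd_absNorm_of_le ((Ideal.span_singleton_le_iff_mem _).mpr hy))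
  rw [Ideal.absNorm_span_singleton] at hle
  zify at hle
  rw [InfinitePlace.prod_eq_abs_norm, ← Algebra.coe_norm_int]
  exact_mod_cast hle

end NumberField

theorem stmt_14 (K : Type*) [Field K] [NumberField K]
    (hrank : ∃ u : (𝓞 K)ˣ, ∀ k : ℕ, 0 < k → u ^ k ≠ 1) :
    ∃ c : ℝ, 1 < c ∧ ∀ I : Ideal (𝓞 K), I ≠ ⊥ →
      (Ideal.absNorm I : ℝ) ≤
        c ^ ((Units.map (Ideal.Quotient.mk I).toMonoidHom).ker.index) := by
  obtain ⟨u, hu⟩ := hrank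
  refine ⟨_, one_lt_prod_infinitePlace_add_one_pow_mult (x := ((u : 𝓞 K) : K)) (by simp),
    fun I hI ↦ ?_⟩
  have : Finite (𝓞 K ⧸ I) := I.finiteQuotientOfFreeOfNeBot hI
  set n := (Units.map (Ideal.Quotient.mk I).toMonoidHom).ker.index
  have hn : n ≠ 0 := I.index_ker_unitsMap_ne_zero
  have hy0 : (u : 𝓞 K) ^ n - 1 ≠ 0 := by
    rw [Ne, sub_eq_zero, ← Units.val_pow_eq_pow_val, Units.val_eq_one]
    exact hu n (Nat.pos_of_ne_zero hn)
  calc (Ideal.absNorm I : ℝ)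
      _ ≤ ∏ w : InfinitePlace K, w (((u : 𝓞 K) ^ n - 1 : 𝓞 K) : K) ^ w.mult :=
        absNorm_le_prod_infinitePlace_of_mem (I.val_pow_index_ker_unitsMap_sub_one_mem u) hy0
      _ ≤ _ := by
        push_cast
        exact prod_infinitePlace_pow_sub_one_le _ hn
end

section
/- Let K be a number field with ring of integers O_K. There exists a real constant k > 0 such that for all but finitely many nonzero ideals I of O_K (equivalently, the set of nonzero ideals violating the inequality is finite), one has ω(I) < k · log N(I) / log log N(I). -/
open NumberField

/-!
Split the prime divisors of `I` at norm `t`. Those of norm at most `t` all divide `t!`, whose norm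
`t! ^ n ≤ t ^ (t n)` (with `n = [K : ℚ]`) is at least `2` to the power of their number; each of the
others has norm greater than `t`, so `t` to the power of their number is at most `N(I)`. Hence
`ω(I) ≤ n t log t / log 2 + log N(I) / log t`, and with `L = log N(I)` the choice `t ≈ L / (log L)²`
makes both terms `O(L / log L)`.
-/

open Real
open scoped Nat

namespace Ideal

open UniqueFactorizationMonoid

theorem finite_setOf_isPrime_dvd {S : Type*} [CommRing S] [IsDedekindDomain S] {I : Ideal S}
    (hI : I ≠ ⊥) : {P : Ideal S | P.IsPrime ∧ P ∣ I}.Finite :=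
  have : Finite {J : Ideal S // J ∣ I} := @Finite.of_fintype _ (fintypeSubtypeDvd I hI)
  (Set.finite_coe_iff.mp this).subset fun _ hP => hP.2

variable {S : Type*} [CommRing S] [IsDedekindDomain S] [Module.Free ℤ S] [Module.Finite ℤ S]

theorem two_le_absNorm_of_isPrime {P : Ideal S} (hP : P.IsPrime) (hP0 : P ≠ ⊥) :
    2 ≤ absNorm P := by
  have h0 : absNorm P ≠ 0 := absNorm_eq_zero_iff.not.mpr hP0
  have h1 : absNorm P ≠ 1 := absNorm_eq_one_iff.not.mpr hP.ne_top
  omega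

theorem pow_card_le_absNorm {I : Ideal S} (hI : I ≠ ⊥) {s : Finset (Ideal S)}
    (hs : ∀ P ∈ s, P.IsPrime ∧ P ∣ I) {m : ℕ} (hm : ∀ P ∈ s, m ≤ absNorm P) :
    m ^ s.card ≤ absNorm I := by
  have hprod : (∏ P ∈ s, P) ∣ I := Finset.prod_primes_dvd I
    (fun P hP => prime_of_isPrime (ne_zero_of_dvd_ne_zero hI (hs P hP).2) (hs P hP).1)
    fun P hP => (hs P hP).2
  calc m ^ s.card = ∏ _P ∈ s, m := (Finset.prod_const m).symm
    _ ≤ ∏ P ∈ s, absNorm P := Finset.prod_le_prod' hm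
    _ = absNorm (∏ P ∈ s, P) := (map_prod absNorm _ _).symm
    _ ≤ absNorm I := Nat.le_of_dvd (Nat.pos_of_ne_zero (absNorm_eq_zero_iff.not.mpr hI))
        (absNorm_dvd_absNorm_of_le (le_of_dvd hprod))

theorem dvd_span_factorial {P : Ideal S} (hP0 : P ≠ ⊥) {t : ℕ} (ht : absNorm P ≤ t) :
    P ∣ span {(t ! : S)} := by
  obtain ⟨c, hc⟩ := Nat.dvd_factorial (Nat.pos_of_ne_zero (absNorm_eq_zero_iff.not.mpr hP0)) ht
  rw [dvd_iff_le, span_singleton_le_iff_mem, hc, Nat.cast_mul]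
  exact mul_mem_right _ _ (absNorm_mem P)

theorem card_mul_log_two_le {s : Finset (Ideal S)} (hs : ∀ P ∈ s, P.IsPrime ∧ P ≠ ⊥) {t : ℕ}
    (ht : ∀ P ∈ s, absNorm P ≤ t) :
    s.card * log 2 ≤ Module.finrank ℤ S * t * log t := by
  have hspan : span {(t ! : S)} ≠ ⊥ := by
    rw [ne_eq, ← absNorm_eq_zero_iff, absNorm_span_natCast]
    positivity
  have hpow : 2 ^ s.card ≤ t ^ (t * Module.finrank ℤ S) :=
    calc 2 ^ s.card ≤ absNorm (span {(t ! : S)}) :=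
          pow_card_le_absNorm hspan
            (fun P hP => ⟨(hs P hP).1, dvd_span_factorial (hs P hP).2 (ht P hP)⟩)
            fun P hP => two_le_absNorm_of_isPrime (hs P hP).1 (hs P hP).2
      _ = t ! ^ Module.finrank ℤ S := absNorm_span_natCast _
      _ ≤ t ^ (t * Module.finrank ℤ S) := by
          rw [pow_mul]; exact Nat.pow_le_pow_left (Nat.factorial_le_pow t) _
  have := log_le_log (by positivity) (show (2 : ℝ) ^ s.card ≤ (t : ℝ) ^ _ by exact_mod_cast hpow)
  rw [log_pow, log_pow, Nat.cast_mul] at this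
  linarith

theorem card_mul_log_le_log_absNorm {I : Ideal S} (hI : I ≠ ⊥) {s : Finset (Ideal S)}
    (hs : ∀ P ∈ s, P.IsPrime ∧ P ∣ I) {t : ℕ} (ht : 0 < t) (hts : ∀ P ∈ s, t ≤ absNorm P) :
    s.card * log t ≤ log (absNorm I) := by
  rw [← log_pow]
  exact log_le_log (by positivity) (by exact_mod_cast pow_card_le_absNorm hI hs hts)

end Ideal

theorem exists_nat_mul_log_le_and_le_log {u : ℝ} (hu : 64 ≤ u) :
    ∃ t : ℕ, 2 ≤ t ∧ t * log t ≤ 2 * exp u / u ∧ u / 2 ≤ log t := by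
  have hu0 : 0 < u := by linarith
  -- `u ^ 3 / 3! ≤ exp u`
  have hexp : 3 * u ^ 2 ≤ exp u := by
    have := pow_div_factorial_le_exp u hu0.le 3
    norm_num [Nat.factorial] at this
    nlinarith
  -- `log u ≤ 2 √u`
  have hlog : log u ≤ u / 4 := by
    have h := log_le_rpow_div hu0.le (by norm_num : (0 : ℝ) < 1 / 2)
    rw [← sqrt_eq_rpow] at h
    have h8 : 8 ≤ √u := le_sqrt_of_sq_le (by linarith)
    nlinarith [mul_self_sqrt hu0.le]
  set x := exp u / u ^ 2 with hx
  have hx3 : 3 ≤ x := by rw [hx, le_div_iff₀ (by positivity)]; exact hexp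
  have hxt : x ≤ ⌈x⌉₊ := Nat.le_ceil x
  have htx : (⌈x⌉₊ : ℝ) ≤ 2 * x := by linarith [Nat.ceil_lt_add_one (by linarith : 0 ≤ x)]
  have ht0 : (0 : ℝ) < ⌈x⌉₊ := by linarith
  have hlog_le : log ⌈x⌉₊ ≤ u := by
    rw [log_le_iff_le_exp ht0]
    refine htx.trans ?_
    rw [hx, mul_div_assoc', div_le_iff₀ (by positivity)]
    linarith [mul_le_mul_of_nonneg_left (show (2 : ℝ) ≤ u ^ 2 by nlinarith) (exp_pos u).le]
  have hlog_ge : u / 2 ≤ log ⌈x⌉₊ := by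
    have := log_le_log (by linarith) hxt
    rw [hx, log_div (by positivity) (by positivity), log_exp, log_pow] at this
    push_cast at this
    linarith
  refine ⟨⌈x⌉₊, Nat.lt_ceil.mpr (by norm_num; linarith), ?_, hlog_ge⟩
  calc (⌈x⌉₊ : ℝ) * log ⌈x⌉₊ ≤ 2 * x * u := by gcongr
    _ = 2 * exp u / u := by rw [hx]; field_simp

namespace NumberField

variable {K : Type*} [Field K] [NumberField K]

theorem omegaIdeal_eq_card {I : Ideal (𝓞 K)} (hI : I ≠ ⊥) :
    omegaIdeal I = (Ideal.finite_setOf_isPrime_dvd hI).toFinset.card :=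
  Set.ncard_eq_toFinset_card _ _

theorem omegaIdeal_le {I : Ideal (𝓞 K)} (hI : I ≠ ⊥) {t : ℕ} (ht : 2 ≤ t) :
    (omegaIdeal I : ℝ) ≤ Module.finrank ℤ (𝓞 K) * t * log t / log 2 +
      log (Ideal.absNorm I) / log t := by
  classical
  set s := (Ideal.finite_setOf_isPrime_dvd hI).toFinset
  have hs : ∀ P ∈ s, P.IsPrime ∧ P ∣ I := fun P hP => by simpa [s] using hP
  have hsmall := Ideal.card_mul_log_two_le (s := s.filter (Ideal.absNorm · ≤ t))
    (fun P hP => have hPs := hs P (Finset.mem_filter.mp hP).1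
      ⟨hPs.1, ne_zero_of_dvd_ne_zero hI hPs.2⟩)
    fun P hP => (Finset.mem_filter.mp hP).2
  have hlarge := Ideal.card_mul_log_le_log_absNorm hI (s := s.filter (¬ Ideal.absNorm · ≤ t))
    (fun P hP => hs P (Finset.mem_filter.mp hP).1) (by omega)
    fun P hP => (not_le.mp (Finset.mem_filter.mp hP).2).le
  have hlog2 : 0 < log 2 := log_pos one_lt_two
  have hlogt : 0 < log t := log_pos (by exact_mod_cast ht)
  rw [omegaIdeal_eq_card hI, ← Finset.card_filter_add_card_filter_not (Ideal.absNorm · ≤ t),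
    Nat.cast_add]
  exact add_le_add ((le_div_iff₀ hlog2).mpr hsmall) ((le_div_iff₀ hlogt).mpr hlarge)

theorem omegaIdeal_lt {I : Ideal (𝓞 K)} (hI : I ≠ ⊥) (hN : exp (exp 64) ≤ Ideal.absNorm I) :
    (omegaIdeal I : ℝ) < (2 * Module.finrank ℤ (𝓞 K) / log 2 + 3) *
      log (Ideal.absNorm I) / log (log (Ideal.absNorm I)) := by
  set n : ℝ := (Module.finrank ℤ (𝓞 K) : ℝ)
  set L := log (Ideal.absNorm I)
  have hL : exp 64 ≤ L := by simpa using log_le_log (by positivity) hN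
  have hL0 : 0 < L := (exp_pos 64).trans_le hL
  set u := log L
  have hu : 64 ≤ u := by simpa using log_le_log (by positivity) hL
  obtain ⟨t, ht, htu, hut⟩ := exists_nat_mul_log_le_and_le_log hu
  rw [exp_log hL0] at htu
  calc (omegaIdeal I : ℝ) ≤ n * (t * log t) / log 2 + L / log t := by
        rw [← mul_assoc]; exact omegaIdeal_le hI ht
    _ ≤ n * (2 * L / u) / log 2 + L / (u / 2) := by gcongr
    _ = (2 * n / log 2 + 2) * L / u := by field_simp
    _ < (2 * n / log 2 + 3) * L / u := by gcongr; norm_num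

end NumberField

theorem stmt_15 (K : Type*) [Field K] [NumberField K] :
    ∃ k : ℝ, 0 < k ∧
      {I : Ideal (𝓞 K) | I ≠ ⊥ ∧
        ¬ ((omegaIdeal I : ℝ) <
            k * Real.log (Ideal.absNorm I) / Real.log (Real.log (Ideal.absNorm I)))}.Finite
      := by
  refine ⟨2 * Module.finrank ℤ (𝓞 K) / log 2 + 3, by positivity, ?_⟩
  refine (Ideal.finite_setOfPred_absNorm_le (S := 𝓞 K) ⌈exp (exp 64)⌉₊).subset ?_
  rintro I ⟨hI, hω⟩
  by_contra hN
  exact hω (omegaIdeal_lt hI ((Nat.le_ceil _).trans (by exact_mod_cast (not_le.mp hN).le)))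
end
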